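/- Orthogonality condition: for unit covectors u ≠ ±v, the following are equivalent: (i) ⟨u,v⟩ = 0; (ii) for every momentum p with ⟨p,u⟩ < 0 and ⟨p,v⟩ < 0, one has Γ(u)Γ(v) = Γ(v)Γ(u) applied to p and the resulting momentum p_f = p Γ(u)Γ(v) is feasible (⟨p_f,u⟩ ≥ 0 and ⟨p_f,v⟩ ≥ 0). -/

import Mathlib

/-!
Reflecting in `u` and then in `v` sends `p` to `p - 2a u - 2(b - 2ac) v`, where `a = ⟨p,u⟩`,
`b = ⟨p,v⟩` and `c = ⟨u,v⟩`; the two orders of reflection therefore differ by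
`4c (a v - b u)`. If `c = 0` they agree, and the outgoing momentum has products `-a` and `-b`
with `u` and `v`. Conversely, `p = -(u + v)` is infeasible because `1 + c > 0` (positive
definiteness applied to `u + v ≠ 0`), and it has `a = b`, so commutation at `p` forces `c = 0`
as `u ≠ v`.
-/

open Matrix

noncomputable def kin {n : ℕ} (M : Matrix (Fin n) (Fin n) ℝ)
    (x y : Matrix (Fin 1) (Fin n) ℝ) : ℝ :=
  (x * M⁻¹ * yᵀ) 0 0

noncomputable def Gam {n : ℕ} (M : Matrix (Fin n) (Fin n) ℝ)
    (u : Matrix (Fin 1) (Fin n) ℝ) : Matrix (Fin n) (Fin n) ℝ :=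
  1 - (2 / kin M u u) • (M⁻¹ * uᵀ * u)

lemma Matrix.fin_one_mul_eq_smul {α : Type*} [CommSemiring α] {n : Type*}
    (A : Matrix (Fin 1) (Fin 1) α) (x : Matrix (Fin 1) n α) : A * x = A 0 0 • x := by
  ext i j
  fin_cases i
  simp [Matrix.mul_apply]

section kin

variable {n : ℕ} (M : Matrix (Fin n) (Fin n) ℝ)

lemma kin_add_left (x y w : Matrix (Fin 1) (Fin n) ℝ) :
    kin M (x + y) w = kin M x w + kin M y w := by
  simp [kin, Matrix.add_mul]

lemma kin_add_right (w x y : Matrix (Fin 1) (Fin n) ℝ) :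
    kin M w (x + y) = kin M w x + kin M w y := by
  simp [kin, Matrix.mul_add]

lemma kin_sub_left (x y w : Matrix (Fin 1) (Fin n) ℝ) :
    kin M (x - y) w = kin M x w - kin M y w := by
  simp [kin, Matrix.sub_mul]

lemma kin_neg_left (x w : Matrix (Fin 1) (Fin n) ℝ) : kin M (-x) w = -kin M x w := by
  simp [kin]

lemma kin_smul_left (a : ℝ) (x w : Matrix (Fin 1) (Fin n) ℝ) :
    kin M (a • x) w = a * kin M x w := by
  simp [kin]

variable {M}

lemma kin_comm (hM : M.IsSymm) (x y : Matrix (Fin 1) (Fin n) ℝ) : kin M x y = kin M y x := by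
  have h : (x * M⁻¹ * yᵀ)ᵀ = y * M⁻¹ * xᵀ := by
    rw [transpose_mul, transpose_mul, transpose_transpose, hM.inv.eq, Matrix.mul_assoc]
  rw [kin, kin, ← h, transpose_apply]

lemma kin_eq_dotProduct (x y : Matrix (Fin 1) (Fin n) ℝ) :
    kin M x y = x 0 ⬝ᵥ (M⁻¹ *ᵥ y 0) := by
  rw [dotProduct_mulVec]
  simp [kin, Matrix.mul_apply, vecMul, dotProduct]

lemma kin_self_pos (hM : M.PosDef) {w : Matrix (Fin 1) (Fin n) ℝ} (hw : w ≠ 0) :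
    0 < kin M w w := by
  have hw0 : w 0 ≠ 0 := fun h => hw (by ext i j; fin_cases i; simp [h])
  rw [kin_eq_dotProduct]
  simpa using hM.inv.dotProduct_mulVec_pos hw0

lemma one_add_kin_pos (hM : M.PosDef) {u v : Matrix (Fin 1) (Fin n) ℝ}
    (huu : kin M u u = 1) (hvv : kin M v v = 1) (huv : u ≠ -v) : 0 < 1 + kin M u v := by
  have h := kin_self_pos hM (w := u + v) fun h => huv (eq_neg_of_add_eq_zero_left h)
  rw [kin_add_left, kin_add_right, kin_add_right, huu, hvv,
    kin_comm (isHermitian_iff_isSymm.mp hM.isHermitian) v u] at h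
  linarith

end kin

section Gam

variable {n : ℕ} {M : Matrix (Fin n) (Fin n) ℝ}

-- With Lean's `x / 0 = 0` this also holds when `kin M u u = 0`, both sides being `p`.
lemma mul_Gam (p u : Matrix (Fin 1) (Fin n) ℝ) :
    p * Gam M u = p - (2 * kin M p u / kin M u u) • u := by
  rw [Gam, Matrix.mul_sub, Matrix.mul_one, Matrix.mul_smul, ← Matrix.mul_assoc,
    ← Matrix.mul_assoc, Matrix.fin_one_mul_eq_smul, smul_smul, div_mul_eq_mul_div]
  rfl

lemma mul_Gam_mul_Gam {u v : Matrix (Fin 1) (Fin n) ℝ} (huu : kin M u u = 1)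
    (hvv : kin M v v = 1) (p : Matrix (Fin 1) (Fin n) ℝ) :
    p * Gam M u * Gam M v =
      p - (2 * kin M p u) • u - (2 * (kin M p v - 2 * kin M p u * kin M u v)) • v := by
  rw [mul_Gam, mul_Gam, huu, hvv, kin_sub_left, kin_smul_left, div_one, div_one]

lemma mul_Gam_mul_Gam_sub_mul_Gam_mul_Gam (hM : M.IsSymm) {u v : Matrix (Fin 1) (Fin n) ℝ}
    (huu : kin M u u = 1) (hvv : kin M v v = 1) (p : Matrix (Fin 1) (Fin n) ℝ) :
    p * Gam M u * Gam M v - p * Gam M v * Gam M u =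
      (4 * kin M u v) • (kin M p u • v - kin M p v • u) := by
  rw [mul_Gam_mul_Gam huu hvv, mul_Gam_mul_Gam hvv huu, kin_comm hM v u]
  module

end Gam

theorem orthogonality_condition {n : ℕ}
    (M : Matrix (Fin n) (Fin n) ℝ) (hM : M.PosDef)
    (u v : Matrix (Fin 1) (Fin n) ℝ)
    (huu : kin M u u = 1) (hvv : kin M v v = 1)
    (huv : u ≠ v) (huv' : u ≠ -v) :
    kin M u v = 0 ↔
      ∀ p : Matrix (Fin 1) (Fin n) ℝ, kin M p u < 0 → kin M p v < 0 →
        p * Gam M u * Gam M v = p * Gam M v * Gam M u ∧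
        0 ≤ kin M (p * Gam M u * Gam M v) u ∧
        0 ≤ kin M (p * Gam M u * Gam M v) v := by
  have hS : M.IsSymm := isHermitian_iff_isSymm.mp hM.isHermitian
  have hcomm := mul_Gam_mul_Gam_sub_mul_Gam_mul_Gam hS huu hvv
  constructor
  · intro hc p hpu hpv
    refine ⟨sub_eq_zero.mp (by rw [hcomm, hc, mul_zero, zero_smul]), ?_, ?_⟩ <;>
      simp only [mul_Gam_mul_Gam huu hvv, kin_sub_left, kin_smul_left, huu, hvv,
        kin_comm hS v u, hc] <;> linarith
  · intro h
    have hpos := one_add_kin_pos hM huu hvv huv'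
    have hpu : kin M (-(u + v)) u = -(1 + kin M u v) := by
      rw [kin_neg_left, kin_add_left, huu, kin_comm hS v u]
    have hpv : kin M (-(u + v)) v = -(1 + kin M u v) := by
      rw [kin_neg_left, kin_add_left, hvv, add_comm]
    have hE := sub_eq_zero.mpr (h _ (by linarith) (by linarith)).1
    rw [hcomm, hpu, hpv, ← smul_sub, smul_smul, smul_eq_zero, sub_eq_zero] at hE
    rcases hE with hE | hE
    · nlinarith
    · exact absurd hE.symm huv
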